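/- If a, b ∈ D and a > b, then √(a² − b²) ∈ D. -/

import Mathlib

/-- `φ(p,q) = (p₁−q₁)² + (p₂−q₂)²` for `p, q ∈ ℂ²`. -/
noncomputable def phi2 (p q : Fin 2 → ℂ) : ℂ := (p 0 - q 0) ^ 2 + (p 1 - q 1) ^ 2

/-- `D` is the set of real `d > 0` such that for all `x, y ∈ ℝ²` with `|x−y| = d` there is a
finite set `S` with `{x,y} ⊆ S ⊆ ℝ²` such that every map `f : S → ℂ²` preserving unit
distance (i.e. `φ(f u, f v) = 1` whenever `u, v ∈ S` and `|u−v| = 1`) satisfies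
`φ(f x, f y) = d²`. -/
noncomputable def D : Set ℝ :=
  {d | 0 < d ∧ ∀ x y : EuclideanSpace ℝ (Fin 2), dist x y = d →
    ∃ S : Set (EuclideanSpace ℝ (Fin 2)), S.Finite ∧ x ∈ S ∧ y ∈ S ∧
      ∀ f : EuclideanSpace ℝ (Fin 2) → (Fin 2 → ℂ),
        (∀ u ∈ S, ∀ v ∈ S, dist u v = 1 → phi2 (f u) (f v) = 1) →
        phi2 (f x) (f y) = (d : ℂ) ^ 2}

/-! Over `ℂ²` the form `φ` is nondegenerate, so the rigid Euclidean configurations behind the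
Beckman–Quarles argument stay rigid, except that a vector may be isotropic. Two equilateral
triangles on a common side force their apices to coincide or to lie at squared distance `3d²`;
a third point rules out coincidence, so `√3 d ∈ D`. For `|x y| = 2d`, the two equilateral
triangles on `x m` (with `m` at distance `d` from `x` and `y`) whose apices lie at distance
`√3 d` from `y` and from each other force `m` to be the midpoint of `x y`, so `2d ∈ D`.
Finally, for `|x y| = √(a² - b²)`, the points `z, z'` at distance `b` from `y` perpendicular
to `x y` have `|z z'| = 2b`; this forces `y` to be the midpoint of `z z'`, and Apollonius' identity
`φ(x,z) + φ(x,z') = 2 φ(x,y) + φ(z,z')/2` gives `φ(x,y) = a² - b²`. -/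

local notation "ℝ²" => EuclideanSpace ℝ (Fin 2)
local notation "ℂ²" => Fin 2 → ℂ

lemma phi2_self (p : ℂ²) : phi2 p p = 0 := by simp [phi2]

lemma phi2_add_phi2_of_add_eq_two_smul {p q m : ℂ²} (h : p + q = 2 • m) (x : ℂ²) :
    phi2 x p + phi2 x q = 2 * phi2 x m + phi2 p q / 2 := by
  have h0 := congrFun h 0
  have h1 := congrFun h 1
  simp only [Pi.add_apply, Pi.smul_apply, nsmul_eq_mul, Nat.cast_ofNat] at h0 h1
  simp only [phi2, eq_sub_of_add_eq' h0, eq_sub_of_add_eq' h1]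
  ring

lemma phi2_eq_four_mul_of_add_eq_two_smul {p q m : ℂ²} (h : p + q = 2 • m) :
    phi2 p q = 4 * phi2 p m := by
  linear_combination (2 : ℂ) * phi2_add_phi2_of_add_eq_two_smul h p - 2 * phi2_self p

/-- `p + q - 2m` is isotropic and orthogonal to the non-isotropic `p - m`; in the
two-dimensional `ℂ²` such a vector vanishes. -/
lemma add_eq_two_smul_of_phi2_eq_four_mul {p q m : ℂ²} {s : ℂ} (hs : s ≠ 0)
    (hpm : phi2 p m = s) (hqm : phi2 q m = s) (hpq : phi2 p q = 4 * s) : p + q = 2 • m := by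
  simp only [phi2] at hpm hqm hpq
  set n0 := p 0 + q 0 - 2 * m 0
  set n1 := p 1 + q 1 - 2 * m 1
  set u0 := p 0 - m 0
  set u1 := p 1 - m 1
  have hnn : n0 ^ 2 + n1 ^ 2 = 0 := by linear_combination 2 * hpm + 2 * hqm - hpq
  have hun : u0 * n0 + u1 * n1 = 0 := by linear_combination (3 * hpm + hqm - hpq) / 2
  have h0 : s * n0 ^ 2 = 0 := by
    linear_combination u1 ^ 2 * hnn + (u0 * n0 - u1 * n1) * hun - n0 ^ 2 * hpm
  have h1 : s * n1 ^ 2 = 0 := by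
    linear_combination u0 ^ 2 * hnn + (u1 * n1 - u0 * n0) * hun - n1 ^ 2 * hpm
  have hn0 : n0 = 0 := pow_eq_zero_iff two_ne_zero |>.mp ((mul_eq_zero.mp h0).resolve_left hs)
  have hn1 : n1 = 0 := pow_eq_zero_iff two_ne_zero |>.mp ((mul_eq_zero.mp h1).resolve_left hs)
  refine funext (Fin.forall_fin_two.mpr ⟨?_, ?_⟩) <;> simp only [Pi.add_apply, Pi.smul_apply]
  · linear_combination hn0
  · linear_combination hn1

/-- For the bilinear form of `phi2`, `n = x - y` and `m = x + y - w - w'` are both orthogonal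
to the non-isotropic `w' - w`, hence parallel; as moreover `n ⊥ m` and
`φ(m) = 3s - φ(n)`, this forces `(3s - φ(n)) n = 0`. -/
lemma eq_or_phi2_eq_three_mul_of_rhombus {x y w w' : ℂ²} {s : ℂ} (hs : s ≠ 0)
    (hxw : phi2 x w = s) (hxw' : phi2 x w' = s) (hyw : phi2 y w = s) (hyw' : phi2 y w' = s)
    (hww' : phi2 w w' = s) : x = y ∨ phi2 x y = 3 * s := by
  simp only [phi2] at *
  set n0 := x 0 - y 0
  set n1 := x 1 - y 1
  set m0 := x 0 + y 0 - w 0 - w' 0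
  set m1 := x 1 + y 1 - w 1 - w' 1
  have k1 : (w' 0 - w 0) * n0 + (w' 1 - w 1) * n1 = 0 := by
    linear_combination (hxw - hxw' - hyw + hyw') / 2
  have k2 : (w' 0 - w 0) * m0 + (w' 1 - w 1) * m1 = 0 := by
    linear_combination (hxw - hxw' + hyw - hyw') / 2
  have k3 : n0 * m0 + n1 * m1 = 0 := by linear_combination hxw - hyw - k1
  have hdet : s * (n0 * m1 - n1 * m0) = 0 := by
    linear_combination (w' 0 - w 0) * (m1 * k1 - n1 * k2) + (w' 1 - w 1) * (n0 * k2 - m0 * k1)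
      - (n0 * m1 - n1 * m0) * hww'
  have det0 : n0 * m1 - n1 * m0 = 0 := (mul_eq_zero.mp hdet).resolve_left hs
  have hmm : m0 ^ 2 + m1 ^ 2 = 3 * s - (n0 ^ 2 + n1 ^ 2) := by
    linear_combination hxw + hxw' + hyw + hyw' - hww'
  have f0 : (3 * s - (n0 ^ 2 + n1 ^ 2)) * n0 = 0 := by
    linear_combination m0 * k3 + m1 * det0 - n0 * hmm
  have f1 : (3 * s - (n0 ^ 2 + n1 ^ 2)) * n1 = 0 := by
    linear_combination m1 * k3 - m0 * det0 - n1 * hmm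
  by_cases hn : n0 = 0 ∧ n1 = 0
  · exact Or.inl (funext (Fin.forall_fin_two.mpr ⟨sub_eq_zero.mp hn.1, sub_eq_zero.mp hn.2⟩))
  · right
    have h3 : 3 * s - (n0 ^ 2 + n1 ^ 2) = 0 := by
      rcases not_and_or.mp hn with h | h
      · exact (mul_eq_zero.mp f0).resolve_right h
      · exact (mul_eq_zero.mp f1).resolve_right h
    linear_combination -h3

/-- The edge vectors `r = R - M`, `t = T - M` of the two equilateral triangles on `P M` span
`ℂ²` (their determinant squares to `3s²/4`) and are both orthogonal to `P + Q - 2M`. -/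
lemma add_eq_two_smul_of_twin_triangles {P Q M R T : ℂ²} {s : ℂ} (hs : s ≠ 0)
    (hPM : phi2 P M = s) (hQM : phi2 Q M = s) (hPR : phi2 P R = s) (hMR : phi2 M R = s)
    (hPT : phi2 P T = s) (hMT : phi2 M T = s) (hRQ : phi2 R Q = 3 * s)
    (hTQ : phi2 T Q = 3 * s) (hRT : phi2 R T = 3 * s) : P + Q = 2 • M := by
  simp only [phi2] at *
  set w0 := P 0 + Q 0 - 2 * M 0
  set w1 := P 1 + Q 1 - 2 * M 1
  set r0 := R 0 - M 0
  set r1 := R 1 - M 1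
  set t0 := T 0 - M 0
  set t1 := T 1 - M 1
  have a1 : r0 * w0 + r1 * w1 = 0 := by linear_combination (hPM + hQM + 2 * hMR - hPR - hRQ) / 2
  have a2 : t0 * w0 + t1 * w1 = 0 := by linear_combination (hPM + hQM + 2 * hMT - hPT - hTQ) / 2
  have a3 : r0 * t0 + r1 * t1 + s / 2 = 0 := by linear_combination (hMR + hMT - hRT) / 2
  have hcross : (r0 * t1 - r1 * t0) ^ 2 = 3 / 4 * s ^ 2 := by
    linear_combination t0 ^ 2 * hMR + t1 ^ 2 * hMR + s * hMT + (s / 2 - (r0 * t0 + r1 * t1)) * a3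
  have hw0 : s ^ 2 * w0 = 0 := by
    linear_combination (4 / 3) * (r0 * t1 - r1 * t0) * (t1 * a1 - r1 * a2) - (4 / 3) * w0 * hcross
  have hw1 : s ^ 2 * w1 = 0 := by
    linear_combination (4 / 3) * (r0 * t1 - r1 * t0) * (r0 * a2 - t0 * a1) - (4 / 3) * w1 * hcross
  have hs2 : s ^ 2 ≠ 0 := pow_ne_zero _ hs
  refine funext (Fin.forall_fin_two.mpr ⟨?_, ?_⟩) <;> simp only [Pi.add_apply, Pi.smul_apply]
  · linear_combination (mul_eq_zero.mp hw0).resolve_left hs2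
  · linear_combination (mul_eq_zero.mp hw1).resolve_left hs2

/-- The point with coordinates `(α, β)` in the orthogonal frame with origin `x`, first axis
`y - x` and second axis `y - x` turned by a right angle. -/
noncomputable def framePoint (x y : ℝ²) (α β : ℝ) : ℝ² :=
  WithLp.toLp 2
    ![x 0 + α * (y 0 - x 0) - β * (y 1 - x 1), x 1 + α * (y 1 - x 1) + β * (y 0 - x 0)]

@[simp]
lemma framePoint_zero_zero (x y : ℝ²) : framePoint x y 0 0 = x := by
  ext i; fin_cases i <;> simp [framePoint]

@[simp]
lemma framePoint_one_zero (x y : ℝ²) : framePoint x y 1 0 = y := by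
  ext i; fin_cases i <;> simp [framePoint]

lemma dist_framePoint_sq (x y : ℝ²) (α β α' β' : ℝ) :
    dist (framePoint x y α β) (framePoint x y α' β') ^ 2 =
      ((α - α') ^ 2 + (β - β') ^ 2) * dist x y ^ 2 := by
  rw [EuclideanSpace.dist_eq, EuclideanSpace.dist_eq, Real.sq_sqrt (by positivity),
    Real.sq_sqrt (by positivity)]
  simp only [Fin.sum_univ_two, framePoint, Real.dist_eq, sq_abs, Matrix.cons_val_zero,
    Matrix.cons_val_one]
  ring

lemma dist_framePoint_eq {x y : ℝ²} {r : ℝ} (hr : 0 ≤ r) (α β α' β' : ℝ)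
    (h : ((α - α') ^ 2 + (β - β') ^ 2) * dist x y ^ 2 = r ^ 2) :
    dist (framePoint x y α β) (framePoint x y α' β') = r := by
  rw [← pow_left_inj₀ dist_nonneg hr two_ne_zero, dist_framePoint_sq, h]

lemma exists_rhombus {x y : ℝ²} {d : ℝ} (hd : 0 ≤ d) (hxy : dist x y = √3 * d) :
    ∃ w w' : ℝ², dist x w = d ∧ dist x w' = d ∧ dist y w = d ∧ dist y w' = d ∧
      dist w w' = d := by
  have h3 : √3 ^ 2 = 3 := Real.sq_sqrt (by norm_num)
  have hxy2 : dist x y ^ 2 = 3 * d ^ 2 := by rw [hxy, mul_pow, h3]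
  refine ⟨framePoint x y (1 / 2) (√3 / 6), framePoint x y (1 / 2) (-(√3 / 6)),
    ?_, ?_, ?_, ?_, ?_⟩
  · simpa using dist_framePoint_eq hd 0 0 (1 / 2) (√3 / 6)
      (by rw [hxy2]; ring_nf; rw [h3]; ring)
  · simpa using dist_framePoint_eq hd 0 0 (1 / 2) (-(√3 / 6))
      (by rw [hxy2]; ring_nf; rw [h3]; ring)
  · simpa using dist_framePoint_eq hd 1 0 (1 / 2) (√3 / 6)
      (by rw [hxy2]; ring_nf; rw [h3]; ring)
  · simpa using dist_framePoint_eq hd 1 0 (1 / 2) (-(√3 / 6))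
      (by rw [hxy2]; ring_nf; rw [h3]; ring)
  · exact dist_framePoint_eq hd _ _ _ _ (by rw [hxy2]; ring_nf; rw [h3]; ring)

lemma exists_isosceles_sqrt_three {x y : ℝ²} {d : ℝ} (hd : 0 ≤ d)
    (hxy : dist x y = √3 * d) : ∃ z : ℝ², dist x z = √3 * d ∧ dist y z = d := by
  have h3 : √3 ^ 2 = 3 := Real.sq_sqrt (by norm_num)
  have h11 : √11 ^ 2 = 11 := Real.sq_sqrt (by norm_num)
  have hxy2 : dist x y ^ 2 = 3 * d ^ 2 := by rw [hxy, mul_pow, h3]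
  refine ⟨framePoint x y (5 / 6) (√11 / 6), ?_, ?_⟩
  · simpa using dist_framePoint_eq (by positivity) 0 0 (5 / 6) (√11 / 6)
      (by rw [hxy2]; ring_nf; rw [h3, h11]; ring)
  · simpa using dist_framePoint_eq hd 1 0 (5 / 6) (√11 / 6)
      (by rw [hxy2]; ring_nf; rw [h11]; ring)

lemma exists_twin_triangles {x y : ℝ²} {d : ℝ} (hd : 0 ≤ d) (hxy : dist x y = 2 * d) :
    ∃ m r r' : ℝ², dist x m = d ∧ dist y m = d ∧ dist x r = d ∧ dist m r = d ∧
      dist x r' = d ∧ dist m r' = d ∧ dist r y = √3 * d ∧ dist r' y = √3 * d ∧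
      dist r r' = √3 * d := by
  have h3 : √3 ^ 2 = 3 := Real.sq_sqrt (by norm_num)
  have hxy2 : dist x y ^ 2 = 4 * d ^ 2 := by rw [hxy]; ring
  have hs : 0 ≤ √3 * d := by positivity
  refine ⟨framePoint x y (1 / 2) 0, framePoint x y (1 / 4) (√3 / 4),
    framePoint x y (1 / 4) (-(√3 / 4)), ?_, ?_, ?_, ?_, ?_, ?_, ?_, ?_, ?_⟩
  · simpa using dist_framePoint_eq hd 0 0 (1 / 2) 0 (by rw [hxy2]; ring)
  · simpa using dist_framePoint_eq hd 1 0 (1 / 2) 0 (by rw [hxy2]; ring)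
  · simpa using dist_framePoint_eq hd 0 0 (1 / 4) (√3 / 4)
      (by rw [hxy2]; ring_nf; rw [h3]; ring)
  · exact dist_framePoint_eq hd _ _ _ _ (by rw [hxy2]; ring_nf; rw [h3]; ring)
  · simpa using dist_framePoint_eq hd 0 0 (1 / 4) (-(√3 / 4))
      (by rw [hxy2]; ring_nf; rw [h3]; ring)
  · exact dist_framePoint_eq hd _ _ _ _ (by rw [hxy2]; ring_nf; rw [h3]; ring)
  · simpa using dist_framePoint_eq hs (1 / 4) (√3 / 4) 1 0
      (by rw [hxy2]; ring_nf; rw [h3]; ring)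
  · simpa using dist_framePoint_eq hs (1 / 4) (-(√3 / 4)) 1 0
      (by rw [hxy2]; ring_nf; rw [h3]; ring)
  · exact dist_framePoint_eq hs _ _ _ _ (by rw [hxy2]; ring)

lemma exists_perpendicular_pair {x y : ℝ²} {a b : ℝ} (ha : 0 ≤ a) (hb : 0 ≤ b)
    (hxy : x ≠ y) (hpyth : dist x y ^ 2 + b ^ 2 = a ^ 2) :
    ∃ z z' : ℝ², dist z y = b ∧ dist z' y = b ∧ dist z z' = 2 * b ∧ dist x z = a ∧
      dist x z' = a := by
  have hc : dist x y ≠ 0 := dist_ne_zero.mpr hxy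
  set t := b / dist x y
  have ht : t ^ 2 * dist x y ^ 2 = b ^ 2 := by simp only [t]; field_simp
  refine ⟨framePoint x y 1 t, framePoint x y 1 (-t), ?_, ?_, ?_, ?_, ?_⟩
  · simpa using dist_framePoint_eq hb 1 t 1 0 (by linear_combination ht)
  · simpa using dist_framePoint_eq hb 1 (-t) 1 0 (by linear_combination ht)
  · exact dist_framePoint_eq (by positivity) _ _ _ _ (by linear_combination 4 * ht)
  · simpa using dist_framePoint_eq ha 0 0 1 t (by linear_combination ht + hpyth)
  · simpa using dist_framePoint_eq ha 0 0 1 (-t) (by linear_combination ht + hpyth)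

def PreservesUnitDist (S : Set ℝ²) (f : ℝ² → ℂ²) : Prop :=
  ∀ u ∈ S, ∀ v ∈ S, dist u v = 1 → phi2 (f u) (f v) = 1

lemma PreservesUnitDist.mono {S T : Set ℝ²} {f : ℝ² → ℂ²} (hST : S ⊆ T)
    (hf : PreservesUnitDist T f) : PreservesUnitDist S f :=
  fun u hu v hv => hf u (hST hu) v (hST hv)

/-- `∀ᶠ f in unitDistFilter, P f` says that preserving unit distances on some finite set
forces `P`. -/
def unitDistFilter : Filter (ℝ² → ℂ²) where
  sets := {s | ∃ S : Set ℝ², S.Finite ∧ {f | PreservesUnitDist S f} ⊆ s}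
  univ_sets := ⟨∅, Set.finite_empty, Set.subset_univ _⟩
  sets_of_superset := by
    rintro s t ⟨S, hS, hSs⟩ hst
    exact ⟨S, hS, hSs.trans hst⟩
  inter_sets := by
    rintro s t ⟨S, hS, hSs⟩ ⟨T, hT, hTt⟩
    exact ⟨S ∪ T, hS.union hT, fun f hf =>
      ⟨hSs (hf.mono Set.subset_union_left), hTt (hf.mono Set.subset_union_right)⟩⟩

lemma mem_D_iff {d : ℝ} : d ∈ D ↔ 0 < d ∧ ∀ x y : ℝ², dist x y = d →
    ∀ᶠ f in unitDistFilter, phi2 (f x) (f y) = (d : ℂ) ^ 2 := by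
  refine and_congr_right fun _ => forall₂_congr fun x y => imp_congr_right fun _ => ?_
  constructor
  · rintro ⟨S, hS, -, -, hSf⟩
    exact ⟨S, hS, hSf⟩
  · rintro ⟨S, hS, hSf⟩
    refine ⟨insert x (insert y S), (hS.insert y).insert x, Set.mem_insert x _,
      Set.mem_insert_of_mem x (Set.mem_insert y S), fun f hf => hSf ?_⟩
    exact PreservesUnitDist.mono ((Set.subset_insert y S).trans (Set.subset_insert x _)) hf

lemma eventually_phi2_eq_of_mem_D {d : ℝ} (hd : d ∈ D) ⦃x y : ℝ²⦄ (hxy : dist x y = d) :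
    ∀ᶠ f in unitDistFilter, phi2 (f x) (f y) = (d : ℂ) ^ 2 :=
  (mem_D_iff.mp hd).2 x y hxy

lemma ofReal_sq_ne_zero_of_mem_D {d : ℝ} (hd : d ∈ D) : (d : ℂ) ^ 2 ≠ 0 :=
  pow_ne_zero 2 (Complex.ofReal_ne_zero.mpr hd.1.ne')

lemma ofReal_sqrt_three_mul_sq (d : ℝ) : ((√3 * d : ℝ) : ℂ) ^ 2 = 3 * (d : ℂ) ^ 2 := by
  rw [← Complex.ofReal_pow, mul_pow, Real.sq_sqrt (by norm_num)]
  push_cast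
  ring

lemma eventually_eq_or_phi2_eq_three_mul_of_mem_D {d : ℝ} (hd : d ∈ D) {x y : ℝ²}
    (hxy : dist x y = √3 * d) :
    ∀ᶠ f in unitDistFilter, f x = f y ∨ phi2 (f x) (f y) = 3 * (d : ℂ) ^ 2 := by
  obtain ⟨w, w', hxw, hxw', hyw, hyw', hww'⟩ := exists_rhombus hd.1.le hxy
  have hD := eventually_phi2_eq_of_mem_D hd
  filter_upwards [hD hxw, hD hxw', hD hyw, hD hyw', hD hww'] with f e1 e2 e3 e4 e5
  exact eq_or_phi2_eq_three_mul_of_rhombus (ofReal_sq_ne_zero_of_mem_D hd) e1 e2 e3 e4 e5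

lemma sqrt_three_mul_mem_D {d : ℝ} (hd : d ∈ D) : √3 * d ∈ D := by
  refine mem_D_iff.mpr ⟨by have := hd.1; positivity, fun x y hxy => ?_⟩
  obtain ⟨z, hxz, hyz⟩ := exists_isosceles_sqrt_three hd.1.le hxy
  filter_upwards [eventually_eq_or_phi2_eq_three_mul_of_mem_D hd hxy,
    eventually_eq_or_phi2_eq_three_mul_of_mem_D hd hxz, eventually_phi2_eq_of_mem_D hd hyz]
    with f hfxy hfxz hfyz
  have hs := ofReal_sq_ne_zero_of_mem_D hd
  rw [ofReal_sqrt_three_mul_sq]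
  refine hfxy.resolve_left fun hxy' => ?_
  rw [hxy'] at hfxz
  rcases hfxz with hyz' | hyz'
  · rw [hyz', phi2_self] at hfyz
    exact hs hfyz.symm
  · exact hs (by linear_combination (hfyz - hyz') / 2)

lemma two_mul_mem_D {d : ℝ} (hd : d ∈ D) : 2 * d ∈ D := by
  refine mem_D_iff.mpr ⟨by linarith [hd.1], fun x y hxy => ?_⟩
  obtain ⟨m, r, r', h1, h2, h3, h4, h5, h6, h7, h8, h9⟩ := exists_twin_triangles hd.1.le hxy
  have hD := eventually_phi2_eq_of_mem_D hd
  have hD3 := eventually_phi2_eq_of_mem_D (sqrt_three_mul_mem_D hd)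
  filter_upwards [hD h1, hD h2, hD h3, hD h4, hD h5, hD h6, hD3 h7, hD3 h8, hD3 h9]
    with f e1 e2 e3 e4 e5 e6 e7 e8 e9
  rw [ofReal_sqrt_three_mul_sq] at e7 e8 e9
  have hmid :=
    add_eq_two_smul_of_twin_triangles (ofReal_sq_ne_zero_of_mem_D hd) e1 e2 e3 e4 e5 e6 e7 e8 e9
  rw [phi2_eq_four_mul_of_add_eq_two_smul hmid, e1]
  push_cast
  ring

theorem sqrt_sub_sq_mem_D {a b : ℝ} (ha : a ∈ D) (hb : b ∈ D) (hab : a > b) :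
    Real.sqrt (a ^ 2 - b ^ 2) ∈ D := by
  have hab2 : 0 < a ^ 2 - b ^ 2 := by nlinarith [ha.1, hb.1]
  refine mem_D_iff.mpr ⟨Real.sqrt_pos.mpr hab2, fun x y hxy => ?_⟩
  have hne : x ≠ y := dist_pos.mp (hxy ▸ Real.sqrt_pos.mpr hab2)
  obtain ⟨z, z', hzy, hz'y, hzz', hxz, hxz'⟩ :=
    exists_perpendicular_pair ha.1.le hb.1.le hne (by rw [hxy, Real.sq_sqrt hab2.le]; ring)
  filter_upwards [eventually_phi2_eq_of_mem_D hb hzy, eventually_phi2_eq_of_mem_D hb hz'y,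
    eventually_phi2_eq_of_mem_D (two_mul_mem_D hb) hzz', eventually_phi2_eq_of_mem_D ha hxz,
    eventually_phi2_eq_of_mem_D ha hxz'] with f e1 e2 e3 e4 e5
  have hzz'4 : phi2 (f z) (f z') = 4 * (b : ℂ) ^ 2 := by rw [e3]; push_cast; ring
  have hmid := add_eq_two_smul_of_phi2_eq_four_mul (ofReal_sq_ne_zero_of_mem_D hb) e1 e2 hzz'4
  have hapol := phi2_add_phi2_of_add_eq_two_smul hmid (f x)
  rw [← Complex.ofReal_pow, Real.sq_sqrt hab2.le]
  push_cast
  linear_combination (e4 + e5 - hapol - hzz'4 / 2) / 2
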